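/- Let G̃ = SL(n+3,ℝ) act on W̃ = ℝ^{n+3} ⊕ ℝ^{(n+3)*} by the standard representation on the first summand and the dual representation on the second. Let w̃₀ = ((0,0,−1,0ⁿ)ᵗ, (0,1,−1,0ⁿ)). Then the stabilizer of w̃₀ in G̃ equals the image i(G) of SL(n+2,ℝ) under the embedding i determined by the decomposition ℝ^{n+3} = ℝe₃ ⊕ span{e₁, e₂+e₃, e₄,…,e_{n+3}}. -/
import Mathlib

open Matrix

def femIdx (n : ℕ) : Fin (n + 3) → Fin (n + 2) := fun r =>
  if _ : r.val < 2 then ⟨r.val, by omega⟩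
  else if _ : r.val = 2 then ⟨1, by omega⟩
  else ⟨r.val - 1, by have := r.isLt; omega⟩

def iMat (n : ℕ) (X : Matrix (Fin (n + 2)) (Fin (n + 2)) ℝ) :
    Matrix (Fin (n + 3)) (Fin (n + 3)) ℝ :=
  Matrix.of fun r s =>
    (if s.val = 2 then (if r.val = 2 then (1 : ℝ) else 0)
     else X (femIdx n r) (femIdx n s))
    - (if r.val = 2 ∧ s.val = 1 then (1 : ℝ) else 0)

/-- The vector `(0,0,−1,0ⁿ)ᵗ ∈ ℝ^{n+3}`. -/
def muVec (n : ℕ) : Fin (n + 3) → ℝ := fun r => if r.val = 2 then -1 else 0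

/-- The covector `(0,1,−1,0ⁿ) ∈ ℝ^{(n+3)*}`. -/
def nuVec (n : ℕ) : Fin (n + 3) → ℝ := fun r =>
  if r.val = 1 then 1 else if r.val = 2 then -1 else 0

namespace Stmt9Aux

variable {n : ℕ}

def i1 (n : ℕ) : Fin (n + 3) := ⟨1, by omega⟩
def i2 (n : ℕ) : Fin (n + 3) := ⟨2, by omega⟩

@[simp] lemma i1_val : (i1 n).val = 1 := rfl
@[simp] lemma i2_val : (i2 n).val = 2 := rfl

def emb (n : ℕ) : Fin (n + 2) → Fin (n + 3) := fun p =>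
  if _ : p.val < 2 then ⟨p.val, by omega⟩ else ⟨p.val + 1, by omega⟩

lemma emb_val_ne_two (p : Fin (n + 2)) : (emb n p).val ≠ 2 := by
  unfold emb; split <;> simp <;> omega

lemma fem_emb (p : Fin (n + 2)) : femIdx n (emb n p) = p := by
  unfold emb femIdx
  rcases p with ⟨v, hv⟩
  by_cases h : v < 2 <;> simp [h] <;> split <;> simp_all <;> omega

lemma emb_fem (r : Fin (n + 3)) (h : r.val ≠ 2) : emb n (femIdx n r) = r := by
  unfold emb femIdx
  rcases r with ⟨v, hv⟩
  simp only at h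
  by_cases h1 : v < 2 <;> simp [h1, h] <;> split <;> simp_all <;> omega

@[simp] lemma fem_i2 : femIdx n (i2 n) = ⟨1, by omega⟩ := by
  simp [femIdx, i2]

@[simp] lemma fem_i1 : femIdx n (i1 n) = ⟨1, by omega⟩ := by
  simp [femIdx, i1]

def splitEquiv (n : ℕ) : Fin (n + 3) ≃ (Fin (n + 2) ⊕ Fin 1) where
  toFun r := if r.val = 2 then Sum.inr 0 else Sum.inl (femIdx n r)
  invFun x := Sum.elim (emb n) (fun _ => i2 n) x
  left_inv r := by
    by_cases h : r.val = 2
    · simp [h]; exact (Fin.ext h).symm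
    · simp [h, emb_fem r h]
  right_inv x := by
    rcases x with p | z
    · simp [emb_val_ne_two p, fem_emb p]
    · simp [i2, Fin.fin_one_eq_zero z]

def bigM (n : ℕ) (X : Matrix (Fin (n + 2)) (Fin (n + 2)) ℝ) :
    Matrix (Fin (n + 3)) (Fin (n + 3)) ℝ :=
  (Matrix.fromBlocks X 0 0 (1 : Matrix (Fin 1) (Fin 1) ℝ)).submatrix
    (splitEquiv n) (splitEquiv n)

lemma det_bigM (X : Matrix (Fin (n + 2)) (Fin (n + 2)) ℝ) :
    (bigM n X).det = X.det := by
  rw [bigM, Matrix.det_submatrix_equiv_self, Matrix.det_fromBlocks_zero₂₁]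
  simp

lemma bigM_apply (X : Matrix (Fin (n + 2)) (Fin (n + 2)) ℝ) (r s : Fin (n + 3)) :
    bigM n X r s =
      if s.val = 2 then (if r.val = 2 then 1 else 0)
      else if r.val = 2 then 0 else X (femIdx n r) (femIdx n s) := by
  unfold bigM splitEquiv
  by_cases hr : r.val = 2 <;> by_cases hs : s.val = 2 <;>
    simp [hr, hs, Matrix.fromBlocks]

lemma i2_ne_i1 : i2 n ≠ i1 n := by
  simp [i1, i2, Fin.ext_iff]

lemma factor (X : Matrix (Fin (n + 2)) (Fin (n + 2)) ℝ) :
    iMat n X =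
      Matrix.transvection (i2 n) (i1 n) 1 *
        (bigM n X * Matrix.transvection (i2 n) (i1 n) (-1)) := by
  ext r s
  have hM := bigM_apply (n := n) X
  by_cases hr : r = i2 n
  · subst hr
    rw [Matrix.transvection_mul_apply_same]
    by_cases hs : s = i1 n
    · subst hs
      rw [Matrix.mul_transvection_apply_same, Matrix.mul_transvection_apply_same]
      simp [iMat, hM]
      ring
    · rw [Matrix.mul_transvection_apply_of_ne (i2 n) (i1 n) _ _ hs,
        Matrix.mul_transvection_apply_of_ne (i2 n) (i1 n) _ _ hs]
      have hs1 : s.val ≠ 1 := fun h => hs (Fin.ext h)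
      by_cases hs2 : s.val = 2
      · simp [iMat, hM, hs2, hs1]
      · simp [iMat, hM, hs2, hs1]
  · rw [Matrix.transvection_mul_apply_of_ne (i2 n) (i1 n) _ _ hr]
    have hr2 : r.val ≠ 2 := fun h => hr (Fin.ext h)
    by_cases hs : s = i1 n
    · subst hs
      rw [Matrix.mul_transvection_apply_same]
      simp [iMat, hM, hr2]
    · rw [Matrix.mul_transvection_apply_of_ne (i2 n) (i1 n) _ _ hs]
      have hs1 : s.val ≠ 1 := fun h => hs (Fin.ext h)
      simp [iMat, hM, hr2, hs1]

lemma det_iMat (X : Matrix (Fin (n + 2)) (Fin (n + 2)) ℝ) :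
    (iMat n X).det = X.det := by
  rw [factor, Matrix.det_mul, Matrix.det_mul,
    Matrix.det_transvection_of_ne _ _ i2_ne_i1,
    Matrix.det_transvection_of_ne _ _ i2_ne_i1, det_bigM]
  ring

lemma mulVec_mu (A : Matrix (Fin (n + 3)) (Fin (n + 3)) ℝ) :
    A.mulVec (muVec n) = fun r => -(A r (i2 n)) := by
  funext r
  have : ∀ s : Fin (n + 3), muVec n s = if s = i2 n then -1 else 0 := by
    intro s
    simp [muVec, i2, Fin.ext_iff]
  simp only [Matrix.mulVec, dotProduct, this, mul_ite, mul_neg_one, mul_zero]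
  simp

lemma vecMul_nu (A : Matrix (Fin (n + 3)) (Fin (n + 3)) ℝ) :
    Matrix.vecMul (nuVec n) A = fun s => A (i1 n) s - A (i2 n) s := by
  funext s
  have hnu : ∀ r : Fin (n + 3), nuVec n r =
      (if r = i1 n then (1 : ℝ) else 0) + (if r = i2 n then -1 else 0) := by
    intro r
    by_cases h1 : r.val = 1
    · simp [nuVec, i1, i2, Fin.ext_iff, h1]
    · by_cases h2 : r.val = 2 <;> simp [nuVec, i1, i2, Fin.ext_iff, h1, h2]
  simp only [Matrix.vecMul, dotProduct, hnu, add_mul, ite_mul, one_mul, zero_mul,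
    neg_one_mul, Finset.sum_add_distrib]
  rw [Finset.sum_ite_eq' Finset.univ (i1 n), Finset.sum_ite_eq' Finset.univ (i2 n)]
  simp [sub_eq_add_neg]

end Stmt9Aux

open Stmt9Aux

/-- The stabilizer in `G̃ = SL(n+3,ℝ)` of `w̃₀ = ((0,0,−1,0ⁿ)ᵗ, (0,1,−1,0ⁿ))` in
`ℝ^{n+3} ⊕ ℝ^{(n+3)*}` (standard ⊕ dual action, `g·λ = λ ∘ g⁻¹`) equals the image
`i(SL(n+2,ℝ))` of the Fefferman-type embedding `i`. -/
theorem stmt9 (n : ℕ) (g : Matrix.SpecialLinearGroup (Fin (n + 3)) ℝ) :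
    (g.val.mulVec (muVec n) = muVec n ∧
      Matrix.vecMul (nuVec n) (g⁻¹).val = nuVec n) ↔
    ∃ X : Matrix.SpecialLinearGroup (Fin (n + 2)) ℝ, g.val = iMat n X.val := by
  have hginv : (g⁻¹).val * g.val = 1 := by
    rw [← Matrix.SpecialLinearGroup.coe_mul, inv_mul_cancel,
      Matrix.SpecialLinearGroup.coe_one]
  have hginv' : g.val * (g⁻¹).val = 1 := by
    rw [← Matrix.SpecialLinearGroup.coe_mul, mul_inv_cancel,
      Matrix.SpecialLinearGroup.coe_one]
  have hnueq : Matrix.vecMul (nuVec n) (g⁻¹).val = nuVec n ↔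
      Matrix.vecMul (nuVec n) g.val = nuVec n := by
    constructor
    · intro h
      calc Matrix.vecMul (nuVec n) g.val
          = Matrix.vecMul (Matrix.vecMul (nuVec n) (g⁻¹).val) g.val := by rw [h]
        _ = Matrix.vecMul (nuVec n) ((g⁻¹).val * g.val) := by rw [Matrix.vecMul_vecMul]
        _ = nuVec n := by rw [hginv, Matrix.vecMul_one]
    · intro h
      calc Matrix.vecMul (nuVec n) (g⁻¹).val
          = Matrix.vecMul (Matrix.vecMul (nuVec n) g.val) (g⁻¹).val := by rw [h]
        _ = Matrix.vecMul (nuVec n) (g.val * (g⁻¹).val) := by rw [Matrix.vecMul_vecMul]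
        _ = nuVec n := by rw [hginv', Matrix.vecMul_one]
  rw [hnueq]
  constructor
  · rintro ⟨h1, h2⟩
    have hcol : ∀ r : Fin (n + 3), g.val r (i2 n) = if r.val = 2 then 1 else 0 := by
      intro r
      have := congrFun h1 r
      rw [mulVec_mu] at this
      have : -(g.val r (i2 n)) = muVec n r := this
      simp only [muVec] at this
      by_cases hr : r.val = 2 <;> simp [hr] at this ⊢ <;> linarith
    have hrow : ∀ s : Fin (n + 3), g.val (i2 n) s = g.val (i1 n) s - nuVec n s := by
      intro s
      have := congrFun h2 s
      rw [vecMul_nu] at this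
      have : g.val (i1 n) s - g.val (i2 n) s = nuVec n s := this
      linarith
    set X0 : Matrix (Fin (n + 2)) (Fin (n + 2)) ℝ :=
      Matrix.of fun p q => g.val (emb n p) (emb n q) with hX0
    have hgeq : g.val = iMat n X0 := by
      ext r s
      by_cases hs2 : s.val = 2
      · have hsi : s = i2 n := Fin.ext hs2
        have hs1 : s.val ≠ 1 := by omega
        rw [hsi, hcol r]
        simp [iMat, hs1]
      · by_cases hr2 : r.val = 2
        · have hri : r = i2 n := Fin.ext hr2
          rw [hri, hrow s]
          have hf1 : emb n (femIdx n (i2 n)) = i1 n := by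
            rw [fem_i2]; simp [emb, i1]
          have hf2 : emb n (femIdx n s) = s := emb_fem s hs2
          simp only [iMat, Matrix.of_apply, hX0, hf1, hf2, hs2, if_false, i2_val, nuVec]
          by_cases hs1 : s.val = 1 <;> simp [hs1]
        · have hf1 : emb n (femIdx n r) = r := emb_fem r hr2
          have hf2 : emb n (femIdx n s) = s := emb_fem s hs2
          simp [iMat, hX0, hf1, hf2, hs2, hr2]
    have hdet : X0.det = 1 := by
      have := g.property
      rw [hgeq, det_iMat] at this
      exact this
    exact ⟨⟨X0, hdet⟩, hgeq⟩
  · rintro ⟨X, hX⟩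
    refine ⟨?_, ?_⟩
    · rw [mulVec_mu]
      funext r
      rw [hX]
      simp only [iMat, Matrix.of_apply, i2_val, muVec]
      by_cases hr : r.val = 2 <;> simp [hr]
    · rw [vecMul_nu]
      funext s
      rw [hX]
      by_cases hs2 : s.val = 2
      · have hs1 : s.val ≠ 1 := by omega
        simp [iMat, nuVec, hs2, hs1]
      · by_cases hs1 : s.val = 1 <;>
          simp [iMat, nuVec, hs2, hs1]
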